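/- arXiv:1905.12123 — 3 statements merged into one kernel-verified Lean document; each statement's English description precedes it below -/
import Mathlib

section
/- Let S be the sinc function S(x) = sin(πx)/(πx) (S(0)=1) and n ≥ 1. If g is a Schwartz function on ℝⁿ whose Fourier transform ĝ vanishes on the cube [-1,1]ⁿ, then ∫_{ℝⁿ} g(x) · det_{1≤i,j≤n}[S(x_i - x_j)] dⁿx = 0. -/
open MeasureTheory

noncomputable def S (x : ℝ) : ℝ :=
  if x = 0 then 1 else Real.sin (Real.pi * x) / (Real.pi * x)

/-!
Expanding the determinant over permutations, the term of `σ` is `∏ᵢ S(x_{σ i} - x_i)`. Since `S` is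
the Fourier transform of the indicator of `(-1/2, 1/2]`, this product is the average over
`t ∈ (-1/2, 1/2]ⁿ` of `e^{-2πi x·ξ(t)}` with `ξ(t)_i = t_i - t_{σ⁻¹ i} ∈ [-1, 1]`. By Fubini the
pairing with `g` becomes the average of `ĝ(ξ(t))`, and every such value vanishes.
-/

open Complex
open scoped Real

lemma S_eq_intervalIntegral (y : ℝ) :
    (S y : ℂ) = ∫ t in (-2⁻¹ : ℝ)..2⁻¹, exp (2 * π * I * (t * y : ℝ)) := by
  rcases eq_or_ne y 0 with rfl | hy
  · norm_num [S]
  have hc : 2 * π * I * y ≠ 0 := by simp [hy, Real.pi_ne_zero, I_ne_zero]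
  simp_rw [ofReal_mul, show ∀ t : ℝ, 2 * π * I * (t * y) = (2 * π * I * y) * t from
    fun t => by ring]
  rw [integral_exp_mul_complex hc, S, if_neg hy]
  have hsin : exp (π * y * I) - exp (-(π * y) * I) = 2 * I * sin (π * y) := by
    rw [exp_mul_I, exp_mul_I, cos_neg, sin_neg]; ring
  push_cast
  rw [show 2 * π * I * y * 2⁻¹ = π * y * I by ring,
    show 2 * π * I * y * -2⁻¹ = -(π * y) * I by ring, hsin]
  field_simp

section

variable {ι : Type*}

def halfCube (ι : Type*) : Set (ι → ℝ) :=
  Set.univ.pi fun _ => Set.Ioc (-2⁻¹ : ℝ) 2⁻¹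

lemma sub_perm_mem_Icc {σ : Equiv.Perm ι} {t : ι → ℝ} (ht : t ∈ halfCube ι) (i : ι) :
    t i - t (σ⁻¹ i) ∈ Set.Icc (-1 : ℝ) 1 := by
  have hi := ht i (Set.mem_univ _)
  have hσi := ht (σ⁻¹ i) (Set.mem_univ _)
  simp only [Set.mem_Ioc] at hi hσi
  constructor <;> linarith [hi.1, hi.2, hσi.1, hσi.2]

variable [Fintype ι]

lemma measurableSet_halfCube : MeasurableSet (halfCube ι) :=
  .univ_pi fun _ => measurableSet_Ioc

instance : IsFiniteMeasure (volume.restrict (halfCube ι)) :=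
  isFiniteMeasure_restrict.mpr <| by simp [halfCube, Real.volume_pi_Ioc]

noncomputable def fourierExp (ξ x : ι → ℝ) : ℂ :=
  exp (-(2 * π * I * (∑ i, x i * ξ i : ℝ)))

lemma norm_fourierExp (ξ x : ι → ℝ) : ‖fourierExp ξ x‖ = 1 := by
  rw [fourierExp, norm_exp]
  simp

lemma prod_S_eq_setIntegral (y : ι → ℝ) :
    ∏ i, (S (y i) : ℂ) = ∫ t in halfCube ι, exp (2 * π * I * (∑ i, t i * y i : ℝ)) := by
  rw [halfCube, volume_pi, Measure.restrict_pi_pi]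
  simp_rw [ofReal_sum, Finset.mul_sum, exp_sum]
  rw [integral_fintype_prod_eq_prod fun i s => exp (2 * π * I * (s * y i : ℝ))]
  simp_rw [S_eq_intervalIntegral,
    intervalIntegral.integral_of_le (by norm_num : (-2⁻¹ : ℝ) ≤ 2⁻¹)]

lemma sum_mul_sub_perm (σ : Equiv.Perm ι) (t x : ι → ℝ) :
    ∑ i, t i * (x (σ i) - x i) = -∑ i, x i * (t i - t (σ⁻¹ i)) := by
  have hσ : ∑ i, x (σ i) * t i = ∑ i, x i * t (σ⁻¹ i) := by
    rw [← Equiv.sum_comp σ (fun i => x i * t (σ⁻¹ i))]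
    simp
  simp only [mul_sub, Finset.sum_sub_distrib, mul_comm (t _) (x _), hσ]
  ring

lemma prod_S_perm_eq_setIntegral (σ : Equiv.Perm ι) (x : ι → ℝ) :
    ∏ i, (S (x (σ i) - x i) : ℂ) = ∫ t in halfCube ι, fourierExp (fun i => t i - t (σ⁻¹ i)) x := by
  simp_rw [prod_S_eq_setIntegral, sum_mul_sub_perm, fourierExp, ofReal_neg, mul_neg]

end

section

variable {ι T : Type*} [Fintype ι] [MeasurableSpace T] {μ : Measure (ι → ℝ)}
  {ν : Measure T} [IsFiniteMeasure ν] {g : (ι → ℝ) → ℂ} {ξ : T → ι → ℝ}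

lemma integrable_mul_fourierExp_prod (hg : Integrable g μ) (hξ : Measurable ξ) :
    Integrable (fun p : (ι → ℝ) × T => g p.1 * fourierExp (ξ p.2) p.1) (μ.prod ν) := by
  refine (hg.comp_fst ν).mul_bdd ?_ (c := 1) (.of_forall fun p => (norm_fourierExp _ _).le)
  unfold fourierExp
  fun_prop

lemma integrable_mul_integral_fourierExp [SFinite μ] (hg : Integrable g μ) (hξ : Measurable ξ) :
    Integrable (fun x => g x * ∫ t, fourierExp (ξ t) x ∂ν) μ := by
  simpa only [integral_const_mul] using
    (integrable_mul_fourierExp_prod (ν := ν) hg hξ).integral_prod_left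

lemma integral_mul_integral_fourierExp_eq_zero [SFinite μ] (hg : Integrable g μ)
    (hξ : Measurable ξ) (hvanish : ∀ᵐ t ∂ν, ∫ x, g x * fourierExp (ξ t) x ∂μ = 0) :
    ∫ x, g x * ∫ t, fourierExp (ξ t) x ∂ν ∂μ = 0 := by
  simp_rw [← integral_const_mul]
  rw [integral_integral_swap (integrable_mul_fourierExp_prod hg hξ)]
  exact integral_eq_zero_of_ae hvanish

end

theorem sine_determinant_bandlimited_general (n : ℕ)
    (g : SchwartzMap (Fin n → ℝ) ℂ)
    (hg : ∀ ξ : Fin n → ℝ, (∀ i, ξ i ∈ Set.Icc (-1 : ℝ) 1) →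
      (∫ x : Fin n → ℝ, g x *
        Complex.exp (-(2 * (Real.pi : ℂ) * Complex.I * (∑ i, x i * ξ i : ℝ)))) = 0) :
    (∫ x : Fin n → ℝ,
      g x * ((Matrix.of fun i j => S (x i - x j)).det : ℝ)) = 0 := by
  have hξ (σ : Equiv.Perm (Fin n)) : Measurable fun (t : Fin n → ℝ) i => t i - t (σ⁻¹ i) := by
    fun_prop
  have hdet (x : Fin n → ℝ) : (((Matrix.of fun i j => S (x i - x j)).det : ℝ) : ℂ) =
      ∑ σ : Equiv.Perm (Fin n), (Equiv.Perm.sign σ : ℂ) *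
        ∫ t in halfCube (Fin n), fourierExp (fun i => t i - t (σ⁻¹ i)) x := by
    rw [Matrix.det_apply']
    push_cast
    simp_rw [Matrix.of_apply, prod_S_perm_eq_setIntegral]
  simp_rw [hdet, Finset.mul_sum, mul_left_comm (g _)]
  rw [integral_finsetSum _ fun σ _ =>
    (integrable_mul_integral_fourierExp g.integrable (hξ σ)).const_mul _]
  refine Finset.sum_eq_zero fun σ _ => ?_
  rw [integral_const_mul, integral_mul_integral_fourierExp_eq_zero g.integrable (hξ σ), mul_zero]
  filter_upwards [ae_restrict_mem measurableSet_halfCube] with t ht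
  exact hg _ (sub_perm_mem_Icc ht)

theorem sine_determinant_bandlimited (n : ℕ) (hn : 1 ≤ n)
    (g : SchwartzMap (Fin n → ℝ) ℂ)
    (hg : ∀ ξ : Fin n → ℝ, (∀ i, ξ i ∈ Set.Icc (-1 : ℝ) 1) →
      (∫ x : Fin n → ℝ, g x *
        Complex.exp (-(2 * (Real.pi : ℂ) * Complex.I * (∑ i, x i * ξ i : ℝ)))) = 0) :
    (∫ x : Fin n → ℝ,
      g x * ((Matrix.of fun i j => S (x i - x j)).det : ℝ)) = 0 :=
  sine_determinant_bandlimited_general n g hg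
end

section
/- Let f = η · D where η is Schwartz on ℝⁿ with supp η̂ ⊆ [-1/(2a), 1/(2a)]ⁿ for some 0 < a ≤ 1/2, and D(x) = det_{1≤i,j≤n}[S(x_i - x_j)] with S the sinc function. Then the Fourier transform f̂(y) = 0 for all y outside the open cube (-1 - 1/(2a), 1 + 1/(2a))ⁿ. -/
/-!
Expanding the determinant over permutations, each term is `∏ i, S (x (σ i) - x i)`. As `S` is
the Fourier transform of the indicator of `[-1/2, 1/2]`, this product is the Fourier transform of
the law `ν_σ` of `t - t ∘ σ⁻¹` for `t` uniform in the cube `[-1/2, 1/2]ⁿ`, a finite measure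
carried by `[-1, 1]ⁿ`. By Fubini, the Fourier transform of `η · ν̂_σ` at `y` is the integral of
`η̂ (y + u)` against `ν_σ`. Finally `η̂` is continuous, so its support is open; lying in the
closed cube of half-side `1/(2a)`, it lies in the open one, which `y + u` misses for
`u ∈ [-1, 1]ⁿ` when `y` is outside the open cube of half-side `1 + 1/(2a)`.
-/

open MeasureTheory

open Set Real
open scoped FourierTransform

namespace VectorFourier

variable {𝕜 V W E : Type*} [CommRing 𝕜] [TopologicalSpace 𝕜] [IsTopologicalRing 𝕜]
  [AddCommGroup V] [Module 𝕜 V] [TopologicalSpace V] [MeasurableSpace V] [BorelSpace V]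
  [AddCommGroup W] [Module 𝕜 W] [TopologicalSpace W]
  [NormedAddCommGroup E] [NormedSpace ℂ E]
  {e : AddChar 𝕜 Circle} {μ : Measure V} {L : V →ₗ[𝕜] W →ₗ[𝕜] 𝕜}

theorem fourierIntegral_finset_sum (he : Continuous e) (hL : Continuous fun p : V × W ↦ L p.1 p.2)
    {ι : Type*} (s : Finset ι) {f : ι → V → E} (hf : ∀ i ∈ s, Integrable (f i) μ) :
    fourierIntegral e μ L (∑ i ∈ s, f i) = ∑ i ∈ s, fourierIntegral e μ L (f i) := by
  ext w
  simp only [fourierIntegral, Finset.sum_apply, Finset.smul_sum]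
  exact integral_finsetSum s fun i hi ↦ (fourierIntegral_convergent_iff he hL w).2 (hf i hi)

variable [MeasurableSpace W] [BorelSpace W] {ν : Measure W} [IsFiniteMeasure ν]

theorem integrable_integral_char_smul [FirstCountableTopology V] (he : Continuous e)
    (hL : Continuous fun p : V × W ↦ L p.1 p.2) {f : V → E} (hf : Integrable f μ) :
    Integrable (fun v ↦ (∫ u, (e (-L v u) : ℂ) ∂ν) • f v) μ := by
  have hcont : Continuous fun v ↦ ∫ u, (e (-L v u) : ℂ) ∂ν := by
    convert fourierIntegral_continuous (E := ℂ) (μ := ν) (L := L.flip) he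
      (hL.comp continuous_swap) (integrable_const 1) with v
    simp [fourierIntegral, Circle.smul_def]
  refine hf.bdd_smul (ν.real univ) hcont.aestronglyMeasurable (ae_of_all _ fun v ↦ ?_)
  simpa using norm_integral_le_of_norm_le_const (μ := ν) (C := 1)
    (ae_of_all _ fun u ↦ (Circle.norm_coe (e (-L v u))).le)

theorem fourierIntegral_integral_char_smul [CompleteSpace E] [ContinuousAdd W] [SigmaFinite μ]
    [SecondCountableTopologyEither V W]
    (he : Continuous e) (hL : Continuous fun p : V × W ↦ L p.1 p.2) {f : V → E}
    (hf : Integrable f μ) (w : W) :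
    fourierIntegral e μ L (fun v ↦ (∫ u, (e (-L v u) : ℂ) ∂ν) • f v) w
      = ∫ u, fourierIntegral e μ L f (w + u) ∂ν := by
  have hmul : ∀ v u, e (-L v (w + u)) • f v = (e (-L v w) : ℂ) • (e (-L v u) : ℂ) • f v := by
    intro v u
    rw [map_add, neg_add, e.map_add_eq_mul, Circle.smul_def, Circle.coe_mul, mul_smul]
  have hint : Integrable (Function.uncurry fun v u ↦ e (-L v (w + u)) • f v) (μ.prod ν) := by
    refine (hf.comp_fst ν).norm.mono' ?_ (ae_of_all _ fun p ↦ ?_)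
    · refine (Continuous.aestronglyMeasurable ?_).fun_smul hf.1.comp_fst
      exact he.comp (hL.comp (continuous_fst.prodMk (continuous_const.add continuous_snd))).neg
    · simp [Function.uncurry]
  calc fourierIntegral e μ L (fun v ↦ (∫ u, (e (-L v u) : ℂ) ∂ν) • f v) w
      = ∫ v, ∫ u, e (-L v (w + u)) • f v ∂ν ∂μ := by
        refine integral_congr_ae (ae_of_all _ fun v ↦ ?_)
        simp only [hmul, Circle.smul_def, integral_smul, integral_smul_const]
    _ = ∫ u, ∫ v, e (-L v (w + u)) • f v ∂μ ∂ν := integral_integral_swap hint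
    _ = ∫ u, fourierIntegral e μ L f (w + u) ∂ν := rfl

end VectorFourier

theorem integral_mul_cexp_eq_fourierIntegral {ι : Type*} [Fintype ι] (g : (ι → ℝ) → ℂ)
    (ξ : ι → ℝ) :
    ∫ x : ι → ℝ, g x * Complex.exp (-(2 * (π : ℂ) * Complex.I * (∑ i, x i * ξ i : ℝ)))
      = VectorFourier.fourierIntegral 𝐞 volume (dotProductBilin ℝ ℝ) g ξ := by
  rw [Real.vector_fourierIntegral_eq_integral_exp_smul]
  congr 1 with x
  rw [smul_eq_mul, mul_comm]
  congr 2
  simp only [dotProductBilin_apply_apply, dotProduct]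
  push_cast
  ring

theorem continuous_dotProductBilin {ι : Type*} [Fintype ι] :
    Continuous fun p : (ι → ℝ) × (ι → ℝ) ↦ dotProductBilin ℝ ℝ p.1 p.2 := by
  simp only [dotProductBilin_apply_apply, dotProduct]
  fun_prop

theorem eq_zero_of_notMem_pi_Ioo {ι E : Type*} [Finite ι] [TopologicalSpace E] [T1Space E]
    [Zero E] {F : (ι → ℝ) → E} (hF : Continuous F) {c : ℝ}
    (hsupp : ∀ ξ, F ξ ≠ 0 → ∀ i, ξ i ∈ Icc (-c) c) {ξ : ι → ℝ}
    (hξ : ξ ∉ univ.pi fun _ ↦ Ioo (-c) c) : F ξ = 0 := by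
  have : Function.support F ⊆ interior (univ.pi fun _ ↦ Icc (-c) c) :=
    hF.isOpen_support.subset_interior_iff.2 fun ξ hξ ↦ mem_univ_pi.2 (hsupp ξ hξ)
  rw [interior_pi_set finite_univ, interior_Icc] at this
  exact Function.notMem_support.1 fun h ↦ hξ (this h)

theorem integral_Icc_fourierChar_mul (u : ℝ) :
    ∫ τ in Icc (-(1 / 2)) (1 / 2), (𝐞 (τ * u) : ℂ) = S u := by
  rw [integral_Icc_eq_integral_Ioc, ← intervalIntegral.integral_of_le (by norm_num)]
  simp only [fourierChar_apply]
  rcases eq_or_ne u 0 with rfl | hu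
  · norm_num [S]
  have hc : 2 * π * u * Complex.I ≠ 0 := by simp [pi_ne_zero, hu]
  have hlin : ∀ τ : ℝ, Complex.exp (↑(2 * π * (τ * u)) * Complex.I)
      = Complex.exp (2 * π * u * Complex.I * τ) := fun τ ↦ by congr 1; push_cast; ring
  simp_rw [hlin, integral_exp_mul_complex hc, S, if_neg hu]
  have e1 : 2 * π * u * Complex.I * ↑(1 / 2 : ℝ) = ↑(π * u) * Complex.I := by push_cast; ring
  have e2 : 2 * π * u * Complex.I * ↑(-(1 / 2) : ℝ) = -↑(π * u) * Complex.I := by push_cast; ring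
  rw [e1, e2, Complex.exp_mul_I, Complex.exp_mul_I, Complex.cos_neg, Complex.sin_neg]
  push_cast
  field_simp
  ring

section Permutation

variable {ι : Type*} [Fintype ι] (σ : Equiv.Perm ι)

noncomputable def permFrequencyMeasure : Measure (ι → ℝ) :=
  (volume.restrict (univ.pi fun _ : ι ↦ Icc (-(1 / 2) : ℝ) (1 / 2))).map
    fun t i ↦ t i - t (σ.symm i)

instance : IsFiniteMeasure (permFrequencyMeasure σ) := by
  have : IsFiniteMeasure (volume.restrict (univ.pi fun _ : ι ↦ Icc (-(1 / 2) : ℝ) (1 / 2))) :=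
    isFiniteMeasure_restrict.2 (isCompact_univ_pi fun _ ↦ isCompact_Icc).measure_lt_top.ne
  unfold permFrequencyMeasure
  infer_instance

theorem ae_permFrequencyMeasure_mem_pi_Icc :
    ∀ᵐ u ∂permFrequencyMeasure σ, u ∈ univ.pi fun _ ↦ Icc (-1 : ℝ) 1 := by
  refine (ae_map_iff (by fun_prop) (MeasurableSet.univ_pi fun _ ↦ measurableSet_Icc)).2 ?_
  filter_upwards [ae_restrict_mem (MeasurableSet.univ_pi fun _ ↦ measurableSet_Icc)] with t ht
  simp only [mem_univ_pi, mem_Icc] at ht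
  intro i _
  constructor <;> linarith [ht i, ht (σ.symm i)]

theorem prod_S_eq_integral_permFrequencyMeasure (x : ι → ℝ) :
    (∏ i, (S (x (σ i) - x i) : ℂ))
      = ∫ u, (𝐞 (-dotProductBilin ℝ ℝ x u) : ℂ) ∂permFrequencyMeasure σ := by
  have hphase : ∀ t : ι → ℝ, (𝐞 (-dotProductBilin ℝ ℝ x fun i ↦ t i - t (σ.symm i)) : ℂ)
      = ∏ i, (𝐞 (t i * (x (σ i) - x i)) : ℂ) := by
    intro t
    have hsum : -dotProductBilin ℝ ℝ x (fun i ↦ t i - t (σ.symm i))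
        = ∑ i, t i * (x (σ i) - x i) := by
      simp only [dotProductBilin_apply_apply, dotProduct, mul_sub, Finset.sum_sub_distrib]
      rw [← Equiv.sum_comp σ (fun i ↦ x i * t (σ.symm i))]
      simp only [Equiv.symm_apply_apply, mul_comm]
      ring
    simp only [hsum, fourierChar_apply, ← Complex.exp_sum]
    push_cast
    congr 1
    rw [Finset.mul_sum, Finset.sum_mul]
  rw [permFrequencyMeasure, integral_map (by fun_prop) (by fun_prop), volume_pi, Measure.restrict_pi_pi]
  simp only [hphase]
  rw [integral_fintype_prod_eq_prod (f := fun i τ ↦ (𝐞 (τ * (x (σ i) - x i)) : ℂ))]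
  simp only [integral_Icc_fourierChar_mul]

end Permutation

theorem add_notMem_pi_Ioo {ι : Type*} {r s : ℝ} {y u : ι → ℝ}
    (hy : y ∉ univ.pi fun _ ↦ Ioo (-(r + s)) (r + s)) (hu : u ∈ univ.pi fun _ ↦ Icc (-r) r) :
    y + u ∉ univ.pi fun _ ↦ Ioo (-s) s := by
  refine fun h ↦ hy fun i _ ↦ ?_
  have hyu := h i trivial
  have hui := hu i trivial
  simp only [Pi.add_apply, mem_Ioo, mem_Icc] at hyu hui ⊢
  constructor <;> linarith

theorem det_S_sub_eq_sum_integral {ι : Type*} [Fintype ι] [DecidableEq ι] (x : ι → ℝ) :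
    (((Matrix.of fun i j ↦ S (x i - x j)).det : ℝ) : ℂ)
      = ∑ σ : Equiv.Perm ι, (Equiv.Perm.sign σ : ℂ) *
          ∫ u, (𝐞 (-dotProductBilin ℝ ℝ x u) : ℂ) ∂permFrequencyMeasure σ := by
  rw [Matrix.det_apply, Complex.ofReal_sum]
  refine Finset.sum_congr rfl fun σ _ ↦ ?_
  rw [← prod_S_eq_integral_permFrequencyMeasure]
  simp [Units.smul_def]

theorem product_bandlimited_general (a : ℝ)
    (n : ℕ) (η : SchwartzMap (Fin n → ℝ) ℂ)
    (hsupp : ∀ ξ : Fin n → ℝ,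
      (∫ x : Fin n → ℝ, η x *
        Complex.exp (-(2 * (Real.pi : ℂ) * Complex.I * (∑ i, x i * ξ i : ℝ)))) ≠ 0 →
      ∀ i, ξ i ∈ Set.Icc (-(1/(2*a))) (1/(2*a)))
    (y : Fin n → ℝ)
    (hy : y ∉ Set.univ.pi fun _ : Fin n =>
      Set.Ioo (-(1 + 1/(2*a))) (1 + 1/(2*a))) :
    (∫ x : Fin n → ℝ,
      (η x * ((Matrix.of fun i j => S (x i - x j)).det : ℝ)) *
        Complex.exp (-(2 * (Real.pi : ℂ) * Complex.I * (∑ i, x i * y i : ℝ)))) = 0 := by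
  simp only [integral_mul_cexp_eq_fourierIntegral] at hsupp ⊢
  have he := continuous_fourierChar
  have hL := continuous_dotProductBilin (ι := Fin n)
  have hη : ∀ ξ ∉ univ.pi fun _ ↦ Ioo (-(1 / (2 * a))) (1 / (2 * a)),
      VectorFourier.fourierIntegral 𝐞 volume (dotProductBilin ℝ ℝ) η ξ = 0 := fun ξ ↦
    eq_zero_of_notMem_pi_Ioo (VectorFourier.fourierIntegral_continuous he hL η.integrable) hsupp
  have hD : (fun x ↦ η x * (((Matrix.of fun i j ↦ S (x i - x j)).det : ℝ) : ℂ))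
      = ∑ σ : Equiv.Perm (Fin n), (Equiv.Perm.sign σ : ℂ) •
          fun x ↦ (∫ u, (𝐞 (-dotProductBilin ℝ ℝ x u) : ℂ) ∂permFrequencyMeasure σ) • η x := by
    ext x
    simp [det_S_sub_eq_sum_integral, Finset.mul_sum, mul_left_comm, mul_comm]
  rw [hD, VectorFourier.fourierIntegral_finset_sum he hL _ fun σ _ ↦
    (VectorFourier.integrable_integral_char_smul he hL η.integrable).smul _, Finset.sum_apply]
  refine Finset.sum_eq_zero fun σ _ ↦ ?_
  rw [VectorFourier.fourierIntegral_const_smul, Pi.smul_apply,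
    VectorFourier.fourierIntegral_integral_char_smul he hL η.integrable,
    integral_eq_zero_of_ae, smul_zero]
  filter_upwards [ae_permFrequencyMeasure_mem_pi_Icc σ] with u hu
  exact hη _ (add_notMem_pi_Ioo hy hu)

theorem product_bandlimited (a : ℝ) (ha : 0 < a) (ha2 : a ≤ 1/2)
    (n : ℕ) (η : SchwartzMap (Fin n → ℝ) ℂ)
    (hsupp : ∀ ξ : Fin n → ℝ,
      (∫ x : Fin n → ℝ, η x *
        Complex.exp (-(2 * (Real.pi : ℂ) * Complex.I * (∑ i, x i * ξ i : ℝ)))) ≠ 0 →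
      ∀ i, ξ i ∈ Set.Icc (-(1/(2*a))) (1/(2*a)))
    (y : Fin n → ℝ)
    (hy : y ∉ Set.univ.pi fun _ : Fin n =>
      Set.Ioo (-(1 + 1/(2*a))) (1 + 1/(2*a))) :
    (∫ x : Fin n → ℝ,
      (η x * ((Matrix.of fun i j => S (x i - x j)).det : ℝ)) *
        Complex.exp (-(2 * (Real.pi : ℂ) * Complex.I * (∑ i, x i * y i : ℝ)))) = 0 :=
  product_bandlimited_general a n η hsupp y hy
end

section
/- Let 0 < a ≤ 1 and define the operator K on ℓ²(aℤ) (with inner product ⟨f,g⟩ = a Σ_{k∈aℤ} f(k)·conj(g(k))) by (Kf)(j) = a Σ_{k∈aℤ} S(j-k) f(k), where S is the sinc function. Then K is an orthogonal projection: K is self-adjoint and K² = K. -/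
/-- The discrete sine kernel operator on `ℓ²(aℤ)`, where the lattice `aℤ` is
parametrized by `ℤ` via `k ↦ a k`. -/
noncomputable def K (a : ℝ) (f : ℤ → ℂ) (j : ℤ) : ℂ :=
  a * ∑' k : ℤ, (S (a * j - a * k) : ℂ) * f k

/-!
Fourier series identify `ℓ²(ℤ)` with `L²(ℝ ⧸ a⁻¹ℤ)` and turn products of `L²` functions into
discrete convolutions of their coefficient sequences. Since `a ≤ 1`, the interval `(-1/2, 1/2]`
embeds in one period, and the Fourier coefficients of the indicator of its image are
`n ↦ a S(a n)`. Hence `K` is conjugate to multiplication by an indicator function, which is an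
orthogonal projection of `L²`.
-/

open MeasureTheory AddCircle Set ComplexConjugate

section FourierL2

variable {T : ℝ} [Fact (0 < T)]

theorem fourierBasis_repr_toLp {u : AddCircle T → ℂ} (hu : MemLp u 2 haarAddCircle) :
    ⇑(fourierBasis.repr (hu.toLp u)) = fourierCoeff u := by
  ext n
  rw [fourierBasis_repr, fourierCoeff_congr_ae hu.coeFn_toLp]

theorem exists_fourierCoeff_eq {f : ℤ → ℂ} (hf : Memℓp f 2) :
    ∃ u : AddCircle T → ℂ, MemLp u 2 haarAddCircle ∧ fourierCoeff u = f := by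
  set F : Lp ℂ 2 (haarAddCircle : Measure (AddCircle T)) := fourierBasis.repr.symm ⟨f, hf⟩
  refine ⟨F, Lp.memLp F, ?_⟩
  ext n
  rw [← fourierBasis_repr, LinearIsometryEquiv.apply_symm_apply]

theorem tsum_fourierCoeff_mul_conj {u v : AddCircle T → ℂ} (hu : MemLp u 2 haarAddCircle)
    (hv : MemLp v 2 haarAddCircle) :
    ∑' n, fourierCoeff u n * conj (fourierCoeff v n) = ∫ t, u t * conj (v t) ∂haarAddCircle := by
  have h := fourierBasis.repr.inner_map_map (hv.toLp v) (hu.toLp u)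
  rw [lp.inner_eq_tsum, L2.inner_def] at h
  simp only [fourierBasis_repr_toLp, RCLike.inner_apply] at h
  rw [h]
  refine integral_congr_ae ?_
  filter_upwards [hu.coeFn_toLp, hv.coeFn_toLp] with t hut hvt
  rw [hut, hvt]

noncomputable def discreteConv (c f : ℤ → ℂ) (j : ℤ) : ℂ := ∑' k, c (j - k) * f k

theorem fourierCoeff_mul_eq_discreteConv {u g : AddCircle T → ℂ} (hu : MemLp u 2 haarAddCircle)
    (hg : MemLp g 2 haarAddCircle) :
    fourierCoeff (u * g) = discreteConv (fourierCoeff u) (fourierCoeff g) := by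
  ext j
  -- `fourierCoeff (u * g) j` is the `L²` pairing of `g` with `conj u * fourier j`; expand it
  -- by Parseval.
  have hw : MemLp (fun t => conj (u t) * fourier j t) 2 haarAddCircle := by
    refine hu.of_le ((Complex.continuous_conj.measurable.comp_aemeasurable hu.aemeasurable).mul
      (map_continuous (fourier j)).aemeasurable).aestronglyMeasurable
      (Filter.Eventually.of_forall fun t => ?_)
    simp [Circle.norm_coe]
  have hconj : ∀ k, conj (fourierCoeff (fun t => conj (u t) * fourier j t) k) =
      fourierCoeff u (j - k) := by
    intro k
    simp only [fourierCoeff, smul_eq_mul, ← integral_conj]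
    refine integral_congr_ae (Filter.Eventually.of_forall fun t => ?_)
    rw [show -(j - k) = k + -j by ring]
    simp only [map_mul, Complex.conj_conj, ← fourier_neg, neg_neg, fourier_add]
    ring
  rw [discreteConv, ← tsum_congr fun k => by rw [← hconj k, mul_comm],
    tsum_fourierCoeff_mul_conj hg hw]
  refine integral_congr_ae (Filter.Eventually.of_forall fun t => ?_)
  simp only [map_mul, Complex.conj_conj, ← fourier_neg, Pi.mul_apply, smul_eq_mul]
  ring

variable {E : Set (AddCircle T)}

theorem discreteConv_fourierCoeff_indicator (hE : MeasurableSet E) {g : AddCircle T → ℂ}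
    (hg : MemLp g 2 haarAddCircle) :
    discreteConv (fourierCoeff (E.indicator 1)) (fourierCoeff g) = fourierCoeff (E.indicator g) := by
  have h1 : MemLp (E.indicator (1 : AddCircle T → ℂ)) 2 haarAddCircle :=
    (memLp_const 1).indicator hE
  rw [← fourierCoeff_mul_eq_discreteConv h1 hg]
  congr 1
  ext t
  by_cases ht : t ∈ E <;> simp [ht]

theorem discreteConv_fourierCoeff_indicator_idem (hE : MeasurableSet E) {f : ℤ → ℂ}
    (hf : Memℓp f 2) :
    discreteConv (fourierCoeff (E.indicator 1)) (discreteConv (fourierCoeff (E.indicator 1)) f) =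
      discreteConv (fourierCoeff (E.indicator 1)) f := by
  obtain ⟨g, hg, rfl⟩ := exists_fourierCoeff_eq (T := T) hf
  rw [discreteConv_fourierCoeff_indicator hE hg,
    discreteConv_fourierCoeff_indicator hE (hg.indicator hE), indicator_indicator, inter_self]

theorem tsum_discreteConv_fourierCoeff_indicator_mul_conj (hE : MeasurableSet E)
    {f g : ℤ → ℂ} (hf : Memℓp f 2) (hg : Memℓp g 2) :
    ∑' j, discreteConv (fourierCoeff (E.indicator 1)) f j * conj (g j) =
      ∑' j, f j * conj (discreteConv (fourierCoeff (E.indicator 1)) g j) := by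
  obtain ⟨u, hu, rfl⟩ := exists_fourierCoeff_eq (T := T) hf
  obtain ⟨v, hv, rfl⟩ := exists_fourierCoeff_eq (T := T) hg
  rw [discreteConv_fourierCoeff_indicator hE hu, discreteConv_fourierCoeff_indicator hE hv,
    tsum_fourierCoeff_mul_conj (hu.indicator hE) hv,
    tsum_fourierCoeff_mul_conj hu (hv.indicator hE)]
  congr 1
  ext t
  by_cases ht : t ∈ E <;> simp [ht]

end FourierL2

section CentredArc

open Real Complex

def centredArc (T : ℝ) : Set (AddCircle T) := ((↑) : ℝ → AddCircle T) '' Ioc (-(1 / 2)) (1 / 2)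

theorem Ioc_neg_half_half_subset {T : ℝ} (hT : 1 ≤ T) :
    Ioc (-(1 / 2) : ℝ) (1 / 2) ⊆ Ioc (-(1 / 2)) (-(1 / 2) + T) :=
  Ioc_subset_Ioc_right (by linarith)

variable {T : ℝ} [Fact (0 < T)]

theorem coe_mem_centredArc_iff (hT : 1 ≤ T) {x : ℝ} (hx : x ∈ Ioc (-(1 / 2)) (-(1 / 2) + T)) :
    (x : AddCircle T) ∈ centredArc T ↔ x ≤ 1 / 2 := by
  refine ⟨?_, fun h => ⟨x, ⟨hx.1, h⟩, rfl⟩⟩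
  rintro ⟨y, hy, hyx⟩
  rw [coe_eq_coe_iff_of_mem_Ioc (Ioc_neg_half_half_subset hT hy) hx] at hyx
  exact hyx ▸ hy.2

theorem measurableSet_centredArc (hT : 1 ≤ T) : MeasurableSet (centredArc T) :=
  measurableSet_Ioc.image_of_continuousOn_injOn continuous_quotient_mk'.continuousOn
    fun _ hx _ hy hxy => (coe_eq_coe_iff_of_mem_Ioc (Ioc_neg_half_half_subset hT hx)
      (Ioc_neg_half_half_subset hT hy)).1 hxy

theorem indicator_centredArc_eq_liftIoc (hT : 1 ≤ T) :
    (centredArc T).indicator (1 : AddCircle T → ℂ) =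
      liftIoc T (-(1 / 2)) ((Iic (1 / 2 : ℝ)).indicator (1 : ℝ → ℂ)) := by
  refine Ioc_ext T (-(1 / 2)) fun x hx => ?_
  rw [liftIoc_coe_apply hx]
  simp only [indicator, coe_mem_centredArc_iff hT hx, mem_Iic, Pi.one_apply]

theorem integral_cexp_neg_two_pi_I_mul_eq_S (ξ : ℝ) :
    ∫ x in (-(1 / 2) : ℝ)..1 / 2, cexp (-2 * π * I * ξ * x) = S ξ := by
  rcases eq_or_ne ξ 0 with rfl | hξ
  · norm_num [S]
  have hc : (-2 * π * I * ξ : ℂ) ≠ 0 := by simp [hξ, pi_ne_zero, I_ne_zero]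
  rw [integral_exp_mul_complex hc, S, if_neg hξ]
  push_cast
  rw [show -2 * π * I * ξ * (1 / 2) = -(π * ξ) * I by ring,
    show -2 * π * I * ξ * -(1 / 2) = (π * ξ) * I by ring, exp_mul_I, exp_mul_I,
    Complex.cos_neg, Complex.sin_neg]
  field_simp
  ring

theorem fourierCoeff_indicator_centredArc (hT : 1 ≤ T) (n : ℤ) :
    fourierCoeff ((centredArc T).indicator (1 : AddCircle T → ℂ)) n = (T⁻¹ * S (n / T) : ℝ) := by
  rw [indicator_centredArc_eq_liftIoc hT, fourierCoeff_liftIoc_eq, fourierCoeffOn_eq_integral,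
    add_sub_cancel_left]
  have hhalf : (1 / 2 : ℝ) ∈ Icc (-(1 / 2)) (-(1 / 2) + T) := ⟨by norm_num, by linarith⟩
  have hintegrand : (fun x : ℝ => fourier (-n) (x : AddCircle T) • (Iic (1 / 2)).indicator 1 x) =
      {x | x ≤ 1 / 2}.indicator (fun x : ℝ => cexp (-2 * π * I * (n / T : ℝ) * x)) := by
    ext x
    by_cases h : x ≤ 1 / 2
    · rw [indicator_of_mem (mem_Iic.2 h), indicator_of_mem (s := {x | x ≤ 1 / 2}) h,
        fourier_coe_apply, Pi.one_apply, smul_eq_mul, mul_one]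
      push_cast
      ring_nf
    · rw [indicator_of_notMem (mt mem_Iic.1 h), indicator_of_notMem (s := {x | x ≤ 1 / 2}) h,
        smul_zero]
  rw [hintegrand, intervalIntegral.integral_indicator hhalf, integral_cexp_neg_two_pi_I_mul_eq_S,
    real_smul]
  push_cast
  ring

end CentredArc

theorem K_eq_discreteConv (a : ℝ) [Fact (0 < a⁻¹)] (ha1 : a ≤ 1) :
    K a = discreteConv (fourierCoeff ((centredArc a⁻¹).indicator 1)) := by
  have ha : 0 < a := inv_pos.1 Fact.out
  ext f j
  rw [K, discreteConv, ← tsum_mul_left]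
  refine tsum_congr fun k => ?_
  rw [fourierCoeff_indicator_centredArc ((one_le_inv₀ ha).2 ha1), inv_inv, div_inv_eq_mul,
    Int.cast_sub, sub_mul, mul_comm (j : ℝ), mul_comm (k : ℝ)]
  push_cast
  ring

theorem discrete_sine_kernel_is_projection (a : ℝ) (ha : 0 < a) (ha1 : a ≤ 1) :
    (∀ f g : ℤ → ℂ, Memℓp f 2 → Memℓp g 2 →
      a * ∑' j : ℤ, (K a f j) * (starRingEnd ℂ) (g j) =
        a * ∑' j : ℤ, f j * (starRingEnd ℂ) (K a g j)) ∧
    (∀ f : ℤ → ℂ, Memℓp f 2 → K a (K a f) = K a f) := by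
  have : Fact (0 < a⁻¹) := ⟨inv_pos.2 ha⟩
  have hE := measurableSet_centredArc ((one_le_inv₀ ha).2 ha1)
  rw [K_eq_discreteConv a ha1]
  exact ⟨fun f g hf hg => by rw [tsum_discreteConv_fourierCoeff_indicator_mul_conj hE hf hg],
    fun f hf => discreteConv_fourierCoeff_indicator_idem hE hf⟩
end
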